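/- Let S, M, A be finite nonempty types, f : S → M, γ ∈ [0,1). For any policy π̄ on the augmented Cheap Talk MDP, the expected discounted return of π̄ (started from initial distribution μ̄(s,m) = μ(s)·[m = f(s)]) equals the expected discounted return of the induced base policy π(a|s) = π̄(a|(s,f(s))) started from μ. In particular, the supremum over augmented policies of the expected return equals the optimal expected return of the base MDP, independently of the choice of f. -/

import Mathlib

/-- State distribution at time `t` induced by policy `π` from initial distribution `μ`. -/
def stateDist {S A : Type} [Fintype S] [Fintype A]
    (P : S → A → S → ℝ) (μ : S → ℝ) (π : S → A → ℝ) : ℕ → S → ℝ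
  | 0 => μ
  | (t + 1) => fun s' => ∑ s, stateDist P μ π t s * ∑ a, π s a * P s a s'

/-- Expected discounted return `E[Σ_t γ^t r_t]` of policy `π`. -/
noncomputable def expReturn {S A : Type} [Fintype S] [Fintype A]
    (γ : ℝ) (P : S → A → S → ℝ) (μ : S → ℝ) (π : S → A → ℝ) (R : S → A → ℝ) : ℝ :=
  ∑' t : ℕ, γ ^ t * ∑ s, stateDist P μ π t s * ∑ a, π s a * R s a

/-- A stochastic policy: nonnegative and summing to one in each state. -/
def IsPolicy {S A : Type} [Fintype A] (π : S → A → ℝ) : Prop :=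
  (∀ s a, 0 ≤ π s a) ∧ ∀ s, ∑ a, π s a = 1

/-- Augmented Cheap Talk kernel `P̄((s',m')|(s,m),a) = P(s'|s,a)·[m' = f s']`. -/
def augKernel {S M A : Type} [DecidableEq M] (P : S → A → S → ℝ) (f : S → M) :
    S × M → A → S × M → ℝ :=
  fun p a q => if q.2 = f q.1 then P p.1 a q.1 else 0

/-- Augmented initial distribution `μ̄(s,m) = μ(s)·[m = f s]`. -/
def augInit {S M : Type} [DecidableEq M] (μ : S → ℝ) (f : S → M) : S × M → ℝ :=
  fun p => if p.2 = f p.1 then μ p.1 else 0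

/-- Augmented reward `R̄((s,m),a) = R(s,a)`. -/
def augReward {S M A : Type} (R : S → A → ℝ) : S × M → A → ℝ :=
  fun p a => R p.1 a

/- The message component of the augmented chain is always `f` of the state component, so the
augmented state distribution lives on the graph of `f`, where it coincides with the base state
distribution under the induced policy; the rewards agree there, hence so do the returns. -/

theorem Fintype.sum_prod_ite_eq_graph {S M β : Type} [Fintype S] [Fintype M] [DecidableEq M]
    [AddCommMonoid β] (f : S → M) (g : S × M → β) :
    ∑ p : S × M, (if p.2 = f p.1 then g p else 0) = ∑ s, g (s, f s) := by
  rw [Fintype.sum_prod_type]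
  exact Finset.sum_congr rfl fun s _ => by simp

theorem IsPolicy.comp {S T A : Type} [Fintype A] {π : S → A → ℝ} (hπ : IsPolicy π) (g : T → S) :
    IsPolicy (fun t => π (g t)) :=
  ⟨fun t => hπ.1 (g t), fun t => hπ.2 (g t)⟩

section Augmented

variable {S M A : Type} [Fintype S] [Fintype M] [Fintype A] [DecidableEq M]
  (P : S → A → S → ℝ) (μ : S → ℝ) (f : S → M)

theorem stateDist_augKernel (πbar : S × M → A → ℝ) (t : ℕ) (p : S × M) :
    stateDist (augKernel P f) (augInit μ f) πbar t p =
      if p.2 = f p.1 then stateDist P μ (fun s a => πbar (s, f s) a) t p.1 else 0 := by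
  induction t generalizing p with
  | zero => rfl
  | succ t ih =>
    simp only [stateDist, augKernel, ih, ite_mul, zero_mul, Fintype.sum_prod_ite_eq_graph]
    split_ifs <;> simp only [mul_zero, Finset.sum_const_zero]

theorem expReturn_augKernel (γ : ℝ) (R : S → A → ℝ) (πbar : S × M → A → ℝ) :
    expReturn γ (augKernel P f) (augInit μ f) πbar (augReward R) =
      expReturn γ P μ (fun s a => πbar (s, f s) a) R := by
  unfold expReturn
  congr! 3 with t
  simp only [stateDist_augKernel, augReward, ite_mul, zero_mul, Fintype.sum_prod_ite_eq_graph]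

end Augmented

theorem cheap_talk_return_correspondence_general
    {S M A : Type} [Fintype S] [Fintype M] [Fintype A]
    [DecidableEq M]
    (γ : ℝ)
    (P : S → A → S → ℝ)
    (μ : S → ℝ)
    (R : S → A → ℝ)
    (f : S → M) :
    (∀ πbar : S × M → A → ℝ, IsPolicy πbar →
      expReturn γ (augKernel P f) (augInit μ f) πbar (augReward R) =
        expReturn γ P μ (fun s a => πbar (s, f s) a) R) ∧
    sSup {x : ℝ | ∃ πbar : S × M → A → ℝ, IsPolicy πbar ∧
        x = expReturn γ (augKernel P f) (augInit μ f) πbar (augReward R)} =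
      sSup {x : ℝ | ∃ π : S → A → ℝ, IsPolicy π ∧ x = expReturn γ P μ π R} := by
  refine ⟨fun πbar _ => expReturn_augKernel P μ f γ R πbar, ?_⟩
  congr 1
  ext x
  constructor
  · rintro ⟨πbar, hπbar, rfl⟩
    exact ⟨_, hπbar.comp fun s => (s, f s), expReturn_augKernel P μ f γ R πbar⟩
  · rintro ⟨π, hπ, rfl⟩
    exact ⟨_, hπ.comp Prod.fst, (expReturn_augKernel P μ f γ R fun p => π p.1).symm⟩

/-- Proposition 2 (full statement): any augmented policy attains exactly the return of its
induced base policy, and the optimal attainable return of the augmented Cheap Talk MDP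
equals that of the base MDP, independently of the adversary `f`. -/
theorem cheap_talk_return_correspondence
    {S M A : Type} [Fintype S] [Fintype M] [Fintype A]
    [Nonempty S] [Nonempty M] [Nonempty A] [DecidableEq M]
    (γ : ℝ) (hγ0 : 0 ≤ γ) (hγ1 : γ < 1)
    (P : S → A → S → ℝ) (hPnn : ∀ s a s', 0 ≤ P s a s') (hP : ∀ s a, ∑ s', P s a s' = 1)
    (μ : S → ℝ) (hμnn : ∀ s, 0 ≤ μ s) (hμ : ∑ s, μ s = 1)
    (R : S → A → ℝ)
    (f : S → M) :
    (∀ πbar : S × M → A → ℝ, IsPolicy πbar →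
      expReturn γ (augKernel P f) (augInit μ f) πbar (augReward R) =
        expReturn γ P μ (fun s a => πbar (s, f s) a) R) ∧
    sSup {x : ℝ | ∃ πbar : S × M → A → ℝ, IsPolicy πbar ∧
        x = expReturn γ (augKernel P f) (augInit μ f) πbar (augReward R)} =
      sSup {x : ℝ | ∃ π : S → A → ℝ, IsPolicy π ∧ x = expReturn γ P μ π R} :=
  cheap_talk_return_correspondence_general γ P μ R f
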